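/- arXiv:2010.03914 — 2 statements merged into one kernel-verified Lean document; each statement's English description precedes it below -/
import Mathlib

section
/- Let M be a monoid and suppose there exists an injective function v : M → ℂ² (no two elements have the same image) and a linear map m : ℂ² ⊗ ℂ² → ℂ² such that m(v(a) ⊗ v(b)) = v(a·b) for all a, b ∈ M, and v(e) is the unit: m(v(e) ⊗ x) = x = m(x ⊗ v(e)) on the span of the image of v. Then M is commutative. -/
open TensorProduct

/-- Every faithful model of a monoid on qubit states is commutative: if `v : M → ℂ²` is
injective, `m : ℂ² ⊗ ℂ² → ℂ²` is linear with `m (v a ⊗ v b) = v (a * b)`, and `v 1` acts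
as a unit for `m` on the span of the image of `v`, then `M` is commutative. -/
theorem monoid_qubit_model_commutative (M : Type) [Monoid M]
    (v : M → (Fin 2 → ℂ)) (hv : Function.Injective v)
    (m : (Fin 2 → ℂ) ⊗[ℂ] (Fin 2 → ℂ) →ₗ[ℂ] (Fin 2 → ℂ))
    (hmul : ∀ a b : M, m (v a ⊗ₜ[ℂ] v b) = v (a * b))
    (hunit : ∀ x ∈ Submodule.span ℂ (Set.range v),
        m (v 1 ⊗ₜ[ℂ] x) = x ∧ m (x ⊗ₜ[ℂ] v 1) = x) :
    ∀ a b : M, a * b = b * a := by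
  intro a b
  apply hv
  rw [← hmul, ← hmul]
  have hva : v a ∈ Submodule.span ℂ (Set.range v) :=
    Submodule.subset_span ⟨a, rfl⟩
  have hvb : v b ∈ Submodule.span ℂ (Set.range v) :=
    Submodule.subset_span ⟨b, rfl⟩
  by_cases h0 : v 1 = 0
  · -- then m (0 ⊗ x) = x forces v a = v b = 0
    have ha : v a = 0 := by
      have := (hunit (v a) hva).1
      rw [h0] at this
      simpa using this.symm
    have hb : v b = 0 := by
      have := (hunit (v b) hvb).1
      rw [h0] at this
      simpa using this.symm
    rw [ha, hb]
  by_cases hc : ∃ c : ℂ, c • v 1 = v a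
  · obtain ⟨c, hc⟩ := hc
    rw [← hc, ← TensorProduct.smul_tmul', TensorProduct.tmul_smul, map_smul, map_smul,
      (hunit (v b) hvb).1, (hunit (v b) hvb).2]
  · push_neg at hc
    have hind : LinearIndependent ℂ ![v a, v 1] := by
      rw [linearIndependent_fin2]
      exact ⟨by simpa using h0, by simpa using hc⟩
    have hspan : Submodule.span ℂ (Set.range ![v a, v 1]) = ⊤ :=
      hind.span_eq_top_of_card_eq_finrank (by simp)
    have hmem : v b ∈ Submodule.span ℂ ({v a, v 1} : Set (Fin 2 → ℂ)) := by
      have : Set.range ![v a, v 1] = {v a, v 1} := by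
        simp [Matrix.range_cons, Matrix.range_empty, Set.pair_comm]
      rw [← this, hspan]
      trivial
    obtain ⟨α, β, hab⟩ := Submodule.mem_span_pair.mp hmem
    rw [← hab]
    simp only [TensorProduct.tmul_add, TensorProduct.add_tmul, map_add,
      ← TensorProduct.smul_tmul', TensorProduct.tmul_smul, map_smul]
    rw [(hunit (v a) hva).1, (hunit (v a) hva).2]
end

section
/- There is no faithful model of the group of unit quaternions on qubit states: there is no injective function v from the unit quaternions to ℂ² and linear map m : ℂ²⊗ℂ² → ℂ² with m(v(a)⊗v(b)) = v(a·b) for all unit quaternions a, b, and v(1) acting as a unit for m on the span of the image of v. -/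
/-!
If `e` is a two-sided unit for a bilinear product `m` on a space of dimension at most two, then `m`
is commutative there: for `x` not a multiple of `e`, the pair `e, x` spans, so every `y` is
`a • e + b • x` and commutes with `x`. An injective multiplicative `v` transfers this commutativity
to the monoid, but the unit quaternions `i` and `j` do not commute (`i j = k = - j i`).
-/

open TensorProduct Module

section UnitalBilinear

variable {K V : Type*} [Field K] [AddCommGroup V] [Module K V]

theorem LinearMap.apply_tmul_comm_of_finrank_le_two [FiniteDimensional K V]
    (hV : finrank K V ≤ 2) (m : V ⊗[K] V →ₗ[K] V) {W : Submodule K V} {e : V}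
    (hunit : ∀ x ∈ W, m (e ⊗ₜ x) = x ∧ m (x ⊗ₜ e) = x) {x y : V} (hx : x ∈ W) (hy : y ∈ W) :
    m (x ⊗ₜ y) = m (y ⊗ₜ x) := by
  by_cases he0 : e = 0
  · obtain rfl : x = 0 := by simpa [he0] using ((hunit x hx).2).symm
    simp
  by_cases hxe : ∃ c : K, c • e = x
  · obtain ⟨c, rfl⟩ := hxe
    simp only [← smul_tmul', tmul_smul, map_smul, (hunit y hy).1, (hunit y hy).2]
  push Not at hxe
  have hli : LinearIndependent K ![e, x] := (LinearIndependent.pair_iff' he0).2 hxe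
  have hspan : Submodule.span K {e, x} = ⊤ := by
    have := hli.fintype_card_le_finrank
    simpa [Matrix.range_cons, Matrix.range_empty, Set.pair_comm] using
      hli.span_eq_top_of_card_eq_finrank' (by simp at this ⊢; omega)
  obtain ⟨a, b, rfl⟩ := Submodule.mem_span_pair.mp (hspan ▸ Submodule.mem_top : y ∈ _)
  simp only [tmul_add, add_tmul, ← smul_tmul', tmul_smul, map_add, map_smul,
    (hunit x hx).1, (hunit x hx).2]

theorem mul_comm_of_injective_of_finrank_le_two {M : Type*} [Monoid M] [FiniteDimensional K V]
    (hV : finrank K V ≤ 2) (v : M → V) (m : V ⊗[K] V →ₗ[K] V) (hinj : Function.Injective v)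
    (hmul : ∀ a b, m (v a ⊗ₜ v b) = v (a * b))
    (hunit : ∀ x ∈ Submodule.span K (Set.range v), m (v 1 ⊗ₜ x) = x ∧ m (x ⊗ₜ v 1) = x)
    (a b : M) : a * b = b * a := by
  have hmem (c : M) : v c ∈ Submodule.span K (Set.range v) := Submodule.subset_span ⟨c, rfl⟩
  apply hinj
  rw [← hmul, ← hmul]
  exact m.apply_tmul_comm_of_finrank_le_two hV hunit (hmem a) (hmem b)

end UnitalBilinear

theorem Quaternion.exists_unitSphere_mul_ne :
    ∃ a b : Metric.sphere (0 : Quaternion ℝ) 1, a * b ≠ b * a := by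
  have hmem (q : Quaternion ℝ) (hq : q.re ^ 2 + q.imI ^ 2 + q.imJ ^ 2 + q.imK ^ 2 = 1) :
      q ∈ Metric.sphere 0 1 := by
    rw [mem_sphere_zero_iff_norm, norm_eq_sqrt_real_inner, Quaternion.inner_self,
      Quaternion.normSq_def', hq, Real.sqrt_one]
  refine ⟨⟨(⟨0, 1, 0, 0⟩ : Quaternion ℝ), hmem _ (by norm_num)⟩,
    ⟨(⟨0, 0, 1, 0⟩ : Quaternion ℝ), hmem _ (by norm_num)⟩, fun h => ?_⟩
  have := congrArg (fun q : Metric.sphere (0 : Quaternion ℝ) 1 => (q : Quaternion ℝ).imK) h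
  rw [Metric.unitSphere.coe_mul, Metric.unitSphere.coe_mul, Quaternion.imK_mul,
    Quaternion.imK_mul] at this
  norm_num at this

/-- There is no faithful model of the group of unit quaternions on qubit states: there is no
injective `v` from the unit quaternions to `ℂ²` together with a linear map
`m : ℂ² ⊗ ℂ² → ℂ²` satisfying `m (v a ⊗ v b) = v (a * b)` and with `v 1` acting as a unit
for `m` on the span of the image of `v`. -/
theorem no_faithful_qubit_model_of_unit_quaternions :
    ¬ ∃ (v : Metric.sphere (0 : Quaternion ℝ) 1 → (Fin 2 → ℂ))
        (m : (Fin 2 → ℂ) ⊗[ℂ] (Fin 2 → ℂ) →ₗ[ℂ] (Fin 2 → ℂ)),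
      Function.Injective v ∧
      (∀ a b : Metric.sphere (0 : Quaternion ℝ) 1, m (v a ⊗ₜ[ℂ] v b) = v (a * b)) ∧
      (∀ x ∈ Submodule.span ℂ (Set.range v),
        m (v 1 ⊗ₜ[ℂ] x) = x ∧ m (x ⊗ₜ[ℂ] v 1) = x) := by
  rintro ⟨v, m, hinj, hmul, hunit⟩
  obtain ⟨a, b, hab⟩ := Quaternion.exists_unitSphere_mul_ne
  exact hab (mul_comm_of_injective_of_finrank_le_two (by simp) v m hinj hmul hunit a b)
end
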